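/- arXiv:1807.08918 — 2 statements merged into one kernel-verified Lean document; each statement's English description precedes it below -/
import Mathlib

section
/- Let C be a smooth projective curve of genus g ≥ 2 and A_r a rank-r vector bundle with a filtration A_1 = O_C ⊂ A_2 ⊂ ⋯ ⊂ A_r by iterated extensions with all successive quotients O_C, such that h^0(A_i/A_j) = 1 for all 0 ≤ j < i ≤ r (with A_0 = 0). Then every endomorphism f ∈ End(A_r) satisfies f(A_i) ⊆ A_i for all i. -/
/-!
STATEMENT 11.  Let `C` be a smooth projective curve of genus `g ≥ 2` and `A_r` a
rank-`r` vector bundle with a filtration `0 = A_0 ⊂ A_1 = O_C ⊂ A_2 ⊂ ⋯ ⊂ A_r` by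
iterated extensions with all successive quotients `O_C`, such that
`h^0(A_i/A_j) = 1` for all `0 ≤ j < i ≤ r`.  Then every endomorphism
`f ∈ End(A_r)` satisfies `f(A_i) ⊆ A_i` for all `i`.

We work in the abelian `k`-linear category `𝒞` of coherent sheaves on `C`, with
`h^0(F) = dim Hom(O_C, F)`.  The filtration is given by monomorphisms
`u n : A n ⟶ A (n+1)`, `chain A u : A j ⟶ A i` is the composite inclusion, the
quotient `A_i/A_j` is the cokernel of this inclusion, and `f(A_i) ⊆ A_i` means that
`f` restricts to an endomorphism of `A_i` commuting with the inclusion into `A_r`.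
-/

open CategoryTheory CategoryTheory.Limits

noncomputable section

/-- The composite `A j ⟶ A i` of the maps of a tower, for `j ≤ i`. -/
def chain {𝒞 : Type*} [Category 𝒞] (A : ℕ → 𝒞) (u : ∀ n, A n ⟶ A (n + 1)) :
    ∀ {j i : ℕ}, j ≤ i → (A j ⟶ A i) :=
  fun {j i} h =>
    Nat.leRecOn (C := fun i => A j ⟶ A i) h (fun {n} φ => φ ≫ u n) (𝟙 (A j))

section ChainLemmas
variable {𝒞 : Type*} [Category 𝒞] (A : ℕ → 𝒞) (u : ∀ n, A n ⟶ A (n + 1))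

lemma chain_self {j : ℕ} (h : j ≤ j) : chain A u h = 𝟙 (A j) :=
  Nat.leRecOn_self _

lemma chain_succ {j i : ℕ} (h : j ≤ i) (h' : j ≤ i + 1) :
    chain A u h' = chain A u h ≫ u i :=
  Nat.leRecOn_succ h _

lemma chain_left {j i : ℕ} (h : j + 1 ≤ i) (h' : j ≤ i) :
    chain A u h' = u j ≫ chain A u h := by
  induction i, h using Nat.le_induction with
  | base =>
    rw [chain_succ A u (Nat.le_refl j), chain_self, chain_self,
      Category.id_comp, Category.comp_id]
  | succ i hi ih =>
    rw [chain_succ A u (Nat.le_of_succ_le hi) h',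
      chain_succ A u hi (Nat.le_succ_of_le hi),
      ih (Nat.le_of_succ_le hi), Category.assoc]

lemma chain_mono (hmono : ∀ n, Mono (u n)) {j i : ℕ} (h : j ≤ i) :
    Mono (chain A u h) := by
  induction i, h using Nat.le_induction with
  | base => rw [chain_self]; infer_instance
  | succ i hi ih =>
    rw [chain_succ A u hi]
    exact @mono_comp _ _ _ _ _ _ ih _ (hmono i)

end ChainLemmas

theorem endomorphism_preserves_filtration
    (k : Type*) [Field k] [IsAlgClosed k]
    (𝒞 : Type*) [Category 𝒞] [Abelian 𝒞] [Linear k 𝒞]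
    -- the structure sheaf `O_C` of a smooth projective curve of genus `g ≥ 2`
    (O : 𝒞) (g : ℕ) (hg : 2 ≤ g)
    (r : ℕ) (hr : 1 ≤ r)
    -- the filtration `A_0 ⊂ A_1 ⊂ ⋯ ⊂ A_r`
    (A : ℕ → 𝒞) (u : ∀ n, A n ⟶ A (n + 1)) (hmono : ∀ n, Mono (u n))
    -- `A_0 = 0` and `A_1 = O_C`
    (hA0 : IsZero (A 0)) (hA1 : Nonempty (A 1 ≅ O))
    -- all successive quotients are `O_C`
    (hquot : ∀ n, n < r → Nonempty (cokernel (u n) ≅ O))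
    -- `h^0(A_i/A_j) = 1` for all `0 ≤ j < i ≤ r`
    (hh0 : ∀ (j i : ℕ) (hji : j ≤ i), j < i → i ≤ r →
      Module.finrank k (O ⟶ cokernel (chain A u hji)) = 1) :
    ∀ (f : A r ⟶ A r) (i : ℕ) (hir : i ≤ r),
      ∃ fi : A i ⟶ A i, fi ≫ chain A u hir = chain A u hir ≫ f := by
  intro f
  -- Key vanishing: the composite `A i ⟶ A r ⟶ A r / A i` induced by `f` is zero.
  have key : ∀ (i : ℕ) (h : i ≤ r),
      chain A u h ≫ f ≫ cokernel.π (chain A u h) = 0 := by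
    intro i
    induction i with
    | zero => intro h; exact hA0.eq_of_src _ _
    | succ i IH =>
      intro h1
      have h0 : i ≤ r := Nat.le_of_succ_le h1
      set ch1 : A (i + 1) ⟶ A r := chain A u h1 with hch1
      set ch0 : A i ⟶ A r := chain A u h0 with hch0
      have hleft : ch0 = u i ≫ ch1 := chain_left A u h1 h0
      set π0 := cokernel.π ch0 with hπ0
      set π1 := cokernel.π ch1 with hπ1
      have IH' : ch0 ≫ f ≫ π0 = 0 := IH h0
      -- induced endomorphism of `A r / A i`
      set fbar : cokernel ch0 ⟶ cokernel ch0 :=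
        cokernel.desc ch0 (f ≫ π0) (by rw [← Category.assoc] at IH' ⊢; simpa using IH')
        with hfbar
      have hfbar' : π0 ≫ fbar = f ≫ π0 := cokernel.π_desc _ _ _
      -- the inclusion `A (i+1) / A i ⟶ A r / A i`
      have hθ0 : u i ≫ ch1 ≫ π0 = 0 := by
        rw [← Category.assoc, ← hleft]; exact cokernel.condition _
      set θ : cokernel (u i) ⟶ cokernel ch0 :=
        cokernel.desc (u i) (ch1 ≫ π0) hθ0 with hθ
      have hθπ : cokernel.π (u i) ≫ θ = ch1 ≫ π0 := cokernel.π_desc _ _ _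
      -- the projection `A r / A i ⟶ A r / A (i+1)`
      have hρ0 : ch0 ≫ π1 = 0 := by
        rw [hleft, Category.assoc, cokernel.condition, comp_zero]
      set ρ : cokernel ch0 ⟶ cokernel ch1 := cokernel.desc ch0 π1 hρ0 with hρ
      have hρπ : π0 ≫ ρ = π1 := cokernel.π_desc _ _ _
      -- `θ ≫ fbar` is a scalar multiple of `θ`
      obtain ⟨c, hc⟩ : ∃ c : k, θ ≫ fbar = c • θ := by
        by_cases hθz : θ = 0
        · exact ⟨0, by rw [hθz, zero_comp, zero_smul]⟩
        · have e : cokernel (u i) ≅ O := (hquot i h1).some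
          have hdim : Module.finrank k (O ⟶ cokernel ch0) = 1 :=
            hh0 i r h0 h1 (le_refl r)
          have ha : e.inv ≫ θ ≠ 0 := by
            intro hz
            apply hθz
            have : e.hom ≫ e.inv ≫ θ = e.hom ≫ (0 : O ⟶ cokernel ch0) := by rw [hz]
            simpa using this
          obtain ⟨c, hc⟩ := (finrank_eq_one_iff_of_nonzero' (e.inv ≫ θ) ha).mp hdim
            (e.inv ≫ θ ≫ fbar)
          refine ⟨c, ?_⟩
          have : e.hom ≫ (c • (e.inv ≫ θ)) = e.hom ≫ (e.inv ≫ θ ≫ fbar) := by rw [hc]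
          rw [Linear.comp_smul] at this
          simp only [← Category.assoc, Iso.hom_inv_id, Category.id_comp] at this
          exact this.symm
      -- conclude
      have expand : ch1 ≫ f ≫ π1 = cokernel.π (u i) ≫ (θ ≫ fbar) ≫ ρ := by
        rw [← hρπ]
        have h2 : π0 ≫ fbar ≫ ρ = f ≫ π0 ≫ ρ := by
          rw [← Category.assoc, hfbar', Category.assoc]
        calc ch1 ≫ f ≫ π0 ≫ ρ = ch1 ≫ π0 ≫ fbar ≫ ρ := by rw [h2]
          _ = cokernel.π (u i) ≫ (θ ≫ fbar) ≫ ρ := by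
              rw [← Category.assoc ch1 π0, ← hθπ]; simp only [Category.assoc]
      rw [expand, hc]
      have : cokernel.π (u i) ≫ (c • θ) ≫ ρ = c • (cokernel.π (u i) ≫ θ ≫ ρ) := by
        rw [Linear.smul_comp, Linear.comp_smul]
      rw [this, ← Category.assoc, hθπ, Category.assoc, hρπ, cokernel.condition, smul_zero]
  -- deduce the factorization through the mono `chain A u hir`
  intro i hir
  have : Mono (chain A u hir) := chain_mono A u hmono hir
  have hz : (chain A u hir ≫ f) ≫ cokernel.π (chain A u hir) = 0 := by
    rw [Category.assoc]; exact key i hir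
  exact ⟨Abelian.monoLift (chain A u hir) (chain A u hir ≫ f) hz,
    Abelian.monoLift_comp _ _ _⟩
end
end

section
/- Let C be a smooth projective curve of genus g ≥ 2 and A_r a rank-r vector bundle with a filtration A_1 = O_C ⊂ A_2 ⊂ ⋯ ⊂ A_r with all successive quotients O_C and h^0(A_i/A_j) = 1 for all 0 ≤ j < i ≤ r. Then dim_k End(A_r) ≤ r. -/
/-!
STATEMENT 12.  Let `C` be a smooth projective curve of genus `g ≥ 2` and `A_r` a
rank-`r` vector bundle with a filtration `0 = A_0 ⊂ A_1 = O_C ⊂ ⋯ ⊂ A_r` with all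
successive quotients `O_C` and `h^0(A_i/A_j) = 1` for all `0 ≤ j < i ≤ r`.  Then
`dim_k End(A_r) ≤ r`.

Encoding as in STATEMENT 11; `End(A_r) = (A r ⟶ A r)` is a `k`-vector space since
the category of coherent sheaves is `k`-linear.
-/

open CategoryTheory CategoryTheory.Limits

noncomputable section

theorem endomorphism_algebra_dim_le
    (k : Type*) [Field k] [IsAlgClosed k]
    (𝒞 : Type*) [Category 𝒞] [Abelian 𝒞] [Linear k 𝒞]
    -- the structure sheaf `O_C` of a smooth projective curve of genus `g ≥ 2`
    (O : 𝒞) (g : ℕ) (hg : 2 ≤ g)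
    (r : ℕ) (hr : 1 ≤ r)
    -- the filtration `A_0 ⊂ A_1 ⊂ ⋯ ⊂ A_r`
    (A : ℕ → 𝒞) (u : ∀ n, A n ⟶ A (n + 1)) (hmono : ∀ n, Mono (u n))
    -- `A_0 = 0` and `A_1 = O_C`
    (hA0 : IsZero (A 0)) (hA1 : Nonempty (A 1 ≅ O))
    -- all successive quotients are `O_C`
    (hquot : ∀ n, n < r → Nonempty (cokernel (u n) ≅ O))
    -- `h^0(A_i/A_j) = 1` for all `0 ≤ j < i ≤ r`
    (hh0 : ∀ (j i : ℕ) (hji : j ≤ i), j < i → i ≤ r →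
      Module.finrank k (O ⟶ cokernel (chain A u hji)) = 1) :
    Module.finrank k (A r ⟶ A r) ≤ r := by
  -- Step 1: `Hom(O, A r)` has rank 1, from `hh0 0 r` and `A r / A 0 ≅ A r`.
  have hO : Module.rank k (O ⟶ A r) = 1 := by
    have h := hh0 0 r (Nat.zero_le r) hr le_rfl
    have hz : chain A u (Nat.zero_le r) = (0 : A 0 ⟶ A r) := hA0.eq_of_src _ _
    rw [hz] at h
    have e : (O ⟶ cokernel (0 : A 0 ⟶ A r)) ≃ₗ[k] (O ⟶ A r) :=
      Linear.homCongr k (Iso.refl O) cokernelZeroIsoTarget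
    rw [e.finrank_eq] at h
    haveI : FiniteDimensional k (O ⟶ A r) :=
      Module.finite_of_finrank_pos (by rw [h]; norm_num)
    rw [← Module.finrank_eq_rank, h, Nat.cast_one]
  -- Step 2: induction on the filtration.
  have key : ∀ n, n ≤ r → Module.rank k (A n ⟶ A r) ≤ n := by
    intro n
    induction n with
    | zero =>
      intro _
      haveI : Subsingleton (A 0 ⟶ A r) := ⟨fun f g => hA0.eq_of_src f g⟩
      simp [rank_subsingleton']
    | succ n ih =>
      intro hn1
      have hnr : n < r := hn1
      have ihn := ih (le_of_lt hnr)
      set φ : (A (n + 1) ⟶ A r) →ₗ[k] (A n ⟶ A r) :=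
        Linear.leftComp (R := k) (A r) (u n) with hφ
      -- the kernel of precomposition with `u n` is `Hom(coker (u n), A r)`
      let e : (cokernel (u n) ⟶ A r) ≃ₗ[k] LinearMap.ker φ :=
        { toFun := fun h => ⟨cokernel.π (u n) ≫ h, by
            simp [hφ, Linear.leftComp, cokernel.condition_assoc]⟩
          map_add' := fun a b => by
            apply Subtype.ext
            simp [Preadditive.comp_add]
          map_smul' := fun c a => by
            apply Subtype.ext
            simp
          invFun := fun g => cokernel.desc (u n) g.1 (LinearMap.mem_ker.mp g.2)
          left_inv := fun h => by
            apply coequalizer.hom_ext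
            simp
          right_inv := fun g => by
            apply Subtype.ext
            exact cokernel.π_desc _ _ _ }
      have hker : Module.rank k (LinearMap.ker φ) ≤ 1 := by
        rw [← e.rank_eq]
        obtain ⟨i⟩ := hquot n hnr
        have e2 : (cokernel (u n) ⟶ A r) ≃ₗ[k] (O ⟶ A r) :=
          Linear.homCongr k i (Iso.refl (A r))
        rw [e2.rank_eq, hO]
      calc Module.rank k (A (n + 1) ⟶ A r)
          = Module.rank k ((A (n + 1) ⟶ A r) ⧸ LinearMap.ker φ)
              + Module.rank k (LinearMap.ker φ) :=
            (Submodule.rank_quotient_add_rank _).symm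
        _ = Module.rank k (LinearMap.range φ) + Module.rank k (LinearMap.ker φ) := by
            rw [φ.quotKerEquivRange.rank_eq]
        _ ≤ Module.rank k (A n ⟶ A r) + 1 :=
            add_le_add (Submodule.rank_le _) hker
        _ ≤ (n : Cardinal) + 1 := add_le_add ihn le_rfl
        _ = ((n + 1 : ℕ) : Cardinal) := by push_cast; ring
  exact Module.finrank_le_of_rank_le (key r le_rfl)
end
end
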